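/- Let F₂ be the free group on x and y. Define elements a₁ = x³, b₁ = y³, and recursively aₛ = x⁻¹ b_{s-1} x and bₛ = y⁻¹ a_{s-1} y for s ≥ 2. Then for every n ≥ 1, the 2n elements a₁, b₁, ..., aₙ, bₙ form a free basis of a free subgroup of F₂ of rank 2n. -/

import Mathlib

/-!
Each `aₛ`, `bₛ` is a conjugate `u c³ u⁻¹` of the cube of a generator `c`, where `u` is the
alternating word `x⁻¹ y⁻¹ x⁻¹ ⋯` (or `y⁻¹ x⁻¹ ⋯`) of length `s - 1`, whose last letter is not
`c^{±1}`. Let the ping-pong sets of `u c³ u⁻¹` and of its inverse be the reduced words starting with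
`u c²` and with `u c⁻²`. Left multiplication by `u c³ u⁻¹` sends a reduced word that does not start
with `u c⁻²` to one starting with `u c²`: once `u⁻¹` has cancelled into the word, at most one
letter `c⁻¹` is left to cancel against `c³`. The `4n` prefixes are pairwise incomparable, so the
sets are disjoint and the ping-pong lemma applies.
-/

namespace Stmt5

abbrev F2 := FreeGroup (Fin 2)

def x : F2 := FreeGroup.of 0
def y : F2 := FreeGroup.of 1

/-- `ab s = (a_{s+1}, b_{s+1})` (0-based). -/
def ab : ℕ → F2 × F2
  | 0 => (x ^ 3, y ^ 3)
  | s + 1 => (x⁻¹ * (ab s).2 * x, y⁻¹ * (ab s).1 * y)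

end Stmt5

universe v

namespace FreeGroup

variable {α : Type v}

def conjCubeWord (u : List (α × Bool)) (e : α × Bool) : List (α × Bool) :=
  u ++ [e, e, e] ++ invRev u

theorem inv_mk_conjCubeWord (u : List (α × Bool)) (a : α) (b : Bool) :
    (mk (conjCubeWord u (a, b)))⁻¹ = mk (conjCubeWord u (a, !b)) := by
  rw [conjCubeWord, conjCubeWord, inv_mk, invRev_append, invRev_append, invRev_invRev,
    List.append_assoc]
  rfl

variable [DecidableEq α]

theorem IsReduced.toWord_mk {L : List (α × Bool)} (h : IsReduced L) : (mk L).toWord = L := by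
  rw [FreeGroup.toWord_mk, h.reduce_eq]

theorem IsReduced.cons_or_eq_cons {L : List (α × Bool)} (h : IsReduced L) (e : α × Bool) :
    IsReduced (e :: L) ∨ ∃ L', L = (e.1, !e.2) :: L' := by
  obtain ⟨e₁, e₂⟩ := e
  rcases L with _ | ⟨⟨d₁, d₂⟩, L'⟩
  · exact .inl .singleton
  · by_cases hd : (d₁, d₂) = (e₁, !e₂)
    · exact .inr ⟨L', by rw [hd]⟩
    · refine .inl (isReduced_cons_cons.2 ⟨fun h₁ => ?_, h⟩)
      cases e₂ <;> cases d₂ <;> simp_all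

def prefixSet (w : List (α × Bool)) : Set (FreeGroup α) := {g | w <+: g.toWord}

theorem disjoint_prefixSet {w₁ w₂ : List (α × Bool)} (h₁₂ : ¬ w₁ <+: w₂) (h₂₁ : ¬ w₂ <+: w₁) :
    Disjoint (prefixSet w₁) (prefixSet w₂) := by
  refine Set.disjoint_left.2 fun g hg₁ hg₂ => ?_
  rcases le_total w₁.length w₂.length with h | h
  · exact h₁₂ (List.prefix_of_prefix_length_le hg₁ hg₂ h)
  · exact h₂₁ (List.prefix_of_prefix_length_le hg₂ hg₁ h)

theorem mk_conjCubeWord_mul_mem_prefixSet {u : List (α × Bool)} {a : α} {b : Bool}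
    (hu : ∀ b, IsReduced (u ++ [(a, b)])) {h : FreeGroup α}
    (hh : h ∉ prefixSet (u ++ [(a, !b), (a, !b)])) :
    mk (conjCubeWord u (a, b)) * h ∈ prefixSet (u ++ [(a, b), (a, b)]) := by
  set t := mk ((a, b) :: invRev u)
  have hsplit : mk (conjCubeWord u (a, b)) = mk (u ++ [(a, b), (a, b)]) * t := by
    simp [t, conjCubeWord, mul_mk]
  have ht_inv : t⁻¹ = mk (u ++ [(a, !b)]) := by
    rw [inv_mk, invRev_cons, invRev_invRev]
    rfl
  have hth : t * h = mk (t * h).toWord := mk_toWord.symm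
  rcases isReduced_toWord.cons_or_eq_cons (a, b) with hD | ⟨D, hD⟩
  · have hred : IsReduced (u ++ [(a, b)] ++ (a, b) :: (t * h).toWord) :=
      (hu b).append_overlap (isReduced_cons_cons.2 ⟨fun _ => rfl, hD⟩) (List.cons_ne_nil _ _)
    rw [prefixSet, Set.mem_ofPred_eq, hsplit, mul_assoc, hth, mul_mk,
      show u ++ [(a, b), (a, b)] ++ (t * h).toWord = u ++ [(a, b)] ++ (a, b) :: (t * h).toWord
        by simp, hred.toWord_mk]
    exact ⟨(t * h).toWord, by simp⟩
  · -- `t * h` starts with `c⁻¹`, so `h = t⁻¹ * (t * h)` starts with `u c⁻²`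
    refine absurd ?_ hh
    have hred : IsReduced (u ++ [(a, !b)] ++ (a, !b) :: D) :=
      (hu !b).append_overlap (isReduced_cons_cons.2 ⟨fun _ => rfl, hD ▸ isReduced_toWord⟩)
        (List.cons_ne_nil _ _)
    rw [prefixSet, Set.mem_ofPred_eq, show h = t⁻¹ * (t * h) by group, ht_inv, hth, hD, mul_mk,
      hred.toWord_mk]
    exact ⟨D, by simp⟩

theorem injective_lift_mk_conjCubeWord {ι : Type v} [Nontrivial ι] (u : ι → List (α × Bool))
    (a : ι → α) (hred : ∀ i b, IsReduced (u i ++ [(a i, b)]))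
    (hprefix : ∀ i j b b', u i ++ [(a i, b), (a i, b)] <+: u j ++ [(a j, b'), (a j, b')] →
      i = j ∧ b = b') :
    Function.Injective (lift fun i => mk (conjCubeWord (u i) (a i, true))) := by
  set X : ι → Bool → Set (FreeGroup α) := fun i b => prefixSet (u i ++ [(a i, b), (a i, b)])
  have hdisj : ∀ i j b b', (i, b) ≠ (j, b') → Disjoint (X i b) (X j b') := fun i j b b' hne =>
    disjoint_prefixSet (fun h => hne (Prod.ext_iff.2 (hprefix i j b b' h)))
      (fun h => hne (Prod.ext_iff.2 (hprefix j i b' b h)).symm)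
  refine injective_lift_of_ping_pong (fun i => mk (conjCubeWord (u i) (a i, true)))
    (fun i => X i true) (fun i => X i false) (fun i => ?_)
    (fun i j hij => hdisj i j true true (by simpa using hij))
    (fun i j hij => hdisj i j false false (by simpa using hij))
    (fun i j => hdisj i j true false (by simp)) (fun i => ?_) (fun i => ?_)
  · have hw : IsReduced (u i ++ [(a i, true)] ++ [(a i, true)]) :=
      (hred i true).append_overlap (by simp) (List.cons_ne_nil _ _)
    refine ⟨mk (u i ++ [(a i, true)] ++ [(a i, true)]), ?_⟩
    simp only [X, prefixSet, Set.mem_ofPred_eq, hw.toWord_mk]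
    exact ⟨[], by simp⟩
  · exact Set.smul_set_subset_iff.2 fun h hh => mk_conjCubeWord_mul_mem_prefixSet (hred i) hh
  · refine Set.smul_set_subset_iff.2 fun h hh => ?_
    rw [Pi.inv_apply, inv_mk_conjCubeWord]
    exact mk_conjCubeWord_mul_mem_prefixSet (hred i) hh

end FreeGroup

namespace Stmt5

open FreeGroup

def conjugatorWord : Fin 2 → ℕ → List (Fin 2 × Bool)
  | _, 0 => []
  | o, s + 1 => (o, false) :: conjugatorWord (o + 1) s

def coreLetter : Fin 2 → ℕ → Fin 2
  | o, 0 => o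
  | o, s + 1 => coreLetter (o + 1) s

def generatorWord (o : Fin 2) (s : ℕ) : List (Fin 2 × Bool) :=
  conjCubeWord (conjugatorWord o s) (coreLetter o s, true)

theorem of_inv_mul_mul_of (o : Fin 2) (s : ℕ) :
    (of o)⁻¹ * mk (generatorWord (o + 1) s) * of o = mk (generatorWord o (s + 1)) := by
  simp [generatorWord, conjCubeWord, conjugatorWord, coreLetter, of, inv_mk, mul_mk, invRev]

theorem ab_eq_mk (s : ℕ) : ab s = (mk (generatorWord 0 s), mk (generatorWord 1 s)) := by
  induction s with
  | zero =>
    simp [ab, x, y, generatorWord, conjCubeWord, conjugatorWord, coreLetter, of, pow_succ, mul_mk]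
  | succ s ih =>
    rw [ab, ih, x, y, ← of_inv_mul_mul_of 0 s, ← of_inv_mul_mul_of 1 s]
    rfl

theorem conjugatorWord_append_cons (o : Fin 2) (s : ℕ) (b : Bool) (L : List (Fin 2 × Bool)) :
    ∃ b' L', conjugatorWord o s ++ (coreLetter o s, b) :: L = (o, b') :: L' := by
  cases s <;> simp [conjugatorWord, coreLetter]

theorem self_ne_add_one (o : Fin 2) : o ≠ o + 1 := by
  revert o; decide

theorem isReduced_conjugatorWord_append (o : Fin 2) (s : ℕ) (b : Bool) :
    IsReduced (conjugatorWord o s ++ [(coreLetter o s, b)]) := by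
  induction s generalizing o with
  | zero => exact .singleton
  | succ s ih =>
    obtain ⟨b', L', hL⟩ := conjugatorWord_append_cons (o + 1) s b []
    have hrest := ih (o + 1)
    rw [hL] at hrest
    rw [conjugatorWord, List.cons_append, coreLetter, hL, isReduced_cons_cons]
    exact ⟨fun h => absurd h (self_ne_add_one o), hrest⟩

theorem eq_of_conjugatorWord_append_prefix {o₁ o₂ : Fin 2} {s₁ s₂ : ℕ} {b₁ b₂ : Bool}
    (h : conjugatorWord o₁ s₁ ++ [(coreLetter o₁ s₁, b₁), (coreLetter o₁ s₁, b₁)] <+: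
      conjugatorWord o₂ s₂ ++ [(coreLetter o₂ s₂, b₂), (coreLetter o₂ s₂, b₂)]) :
    o₁ = o₂ ∧ s₁ = s₂ ∧ b₁ = b₂ := by
  induction s₁ generalizing o₁ o₂ s₂ with
  | zero =>
    cases s₂ with
    | zero => simpa [conjugatorWord, coreLetter] using h
    | succ m =>
      -- the first two letters of the longer word have different generators `o₂` and `o₂ + 1`
      obtain ⟨b', L', hL⟩ := conjugatorWord_append_cons (o₂ + 1) m b₂ [(coreLetter (o₂ + 1) m, b₂)]
      simp only [conjugatorWord, coreLetter, List.cons_append, List.nil_append, hL,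
        List.cons_prefix_cons, Prod.mk.injEq] at h
      exact absurd (h.1.1.symm.trans h.2.1.1) (self_ne_add_one o₂)
  | succ k ih =>
    cases s₂ with
    | zero =>
      have := h.length_le
      simp [conjugatorWord] at this
    | succ m =>
      simp only [conjugatorWord, coreLetter, List.cons_append, List.cons_prefix_cons,
        Prod.mk.injEq] at h
      obtain ⟨-, hk, hb⟩ := ih h.2
      exact ⟨h.1.1, by rw [hk], hb⟩

theorem stmt_5 (n : ℕ) (hn : 1 ≤ n) :
    Function.Injective (FreeGroup.lift
      (Sum.elim (fun i : Fin n => (ab (i : ℕ)).1) (fun i : Fin n => (ab (i : ℕ)).2))) := by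
  have : Nontrivial (Fin n ⊕ Fin n) := ⟨⟨.inl ⟨0, hn⟩, .inr ⟨0, hn⟩, Sum.inl_ne_inr⟩⟩
  let side : Fin n ⊕ Fin n → Fin 2 := Sum.elim (fun _ => 0) (fun _ => 1)
  let depth : Fin n ⊕ Fin n → ℕ := Sum.elim Fin.val Fin.val
  have hgen : Sum.elim (fun i : Fin n => (ab i).1) (fun i : Fin n => (ab i).2) =
      fun i => mk (generatorWord (side i) (depth i)) := by
    funext i
    rcases i with i | i <;> simp [side, depth, ab_eq_mk]
  rw [hgen]
  refine injective_lift_mk_conjCubeWord _ _ (fun i => isReduced_conjugatorWord_append _ _)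
    fun i j b b' h => ?_
  obtain ⟨hside, hdepth, hb⟩ := eq_of_conjugatorWord_append_prefix h
  refine ⟨?_, hb⟩
  rcases i with i | i <;> rcases j with j | j <;> simp_all [side, depth, Fin.ext_iff]

end Stmt5
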